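/- For any non-negative dissimilarity D on a finite set X with n ≥ 2 elements and any rooted phylogenetic tree T on X, the NEME score satisfies σ_D(T) ≤ (n²/4) · min{σ_D(T') : T' a rooted phylogenetic tree on X}. -/

import Mathlib

open Finset

/-- A rooted phylogenetic tree on `X`, encoded by its hierarchy of clusters:
the single child of the root corresponds to the cluster `univ`, leaves to singletons,
and the internal vertices to the clusters of the laminar family. -/
structure RPhyloTree (X : Type*) [Fintype X] [DecidableEq X] where
  clusters : Finset (Finset X)
  top_mem : (Finset.univ : Finset X) ∈ clusters
  singleton_mem : ∀ x : X, ({x} : Finset X) ∈ clusters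
  laminar : ∀ C ∈ clusters, ∀ D ∈ clusters, C ⊆ D ∨ D ⊆ C ∨ Disjoint C D

namespace RPhyloTree

variable {X : Type*} [Fintype X] [DecidableEq X]

/-- The children of the vertex (cluster) `C`: the maximal clusters strictly below `C`. -/
def children (t : RPhyloTree X) (C : Finset X) : Finset (Finset X) :=
  t.clusters.filter (fun A => A ⊂ C ∧ ∀ B ∈ t.clusters, A ⊂ B → ¬ B ⊂ C)

/-- The lowest common ancestor of `x` and `y`: the smallest cluster containing both. -/
def lca (t : RPhyloTree X) (x y : X) : Finset X :=
  (t.clusters.filter fun C => x ∈ C ∧ y ∈ C).inf'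
    ⟨Finset.univ, by simp [t.top_mem]⟩ id

/-- The NEME coefficient `α^T_{x,y} = (deg(lca(x,y)) - 2) /
(2 · Σ_{{u,u'} ⊆ ch(lca(x,y))} |C(u)|·|C(u')|)`.  Here the sum over ordered pairs of
distinct children (`offDiag`) equals twice the sum over unordered pairs, and the
degree of an internal vertex is the number of its children plus one. -/
noncomputable def coeff (t : RPhyloTree X) (x y : X) : ℝ :=
  (((t.children (t.lca x y)).card : ℝ) - 1) /
    (∑ p ∈ (t.children (t.lca x y)).offDiag, ((p.1.card : ℝ) * (p.2.card : ℝ)))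

/-- The NEME score `σ_D(T) = Σ_{{x,y}} α^T_{x,y} · D(x,y)`; the sum over ordered pairs
of distinct elements is twice the sum over unordered pairs. -/
noncomputable def score (t : RPhyloTree X) (D : X → X → ℝ) : ℝ :=
  (1 / 2) * ∑ p ∈ (Finset.univ : Finset X).offDiag, t.coeff p.1 p.2 * D p.1 p.2

/-- A rooted phylogenetic tree is binary if every internal vertex has exactly two children. -/
def IsBinary (t : RPhyloTree X) : Prop :=
  ∀ C ∈ t.clusters, 2 ≤ C.card → (t.children C).card = 2

end RPhyloTree

namespace RPhyloTree

section Aux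

variable {X : Type*} [Fintype X] [DecidableEq X] (t : RPhyloTree X)

lemma lca_le {x y : X} {A : Finset X} (hA : A ∈ t.clusters) (hx : x ∈ A) (hy : y ∈ A) :
    t.lca x y ⊆ A :=
  Finset.inf'_le id (Finset.mem_filter.2 ⟨hA, hx, hy⟩)

lemma lca_spec (x y : X) :
    t.lca x y ∈ t.clusters ∧ x ∈ t.lca x y ∧ y ∈ t.lca x y := by
  set F := t.clusters.filter fun C => x ∈ C ∧ y ∈ C with hF
  have hFne : F.Nonempty := ⟨Finset.univ, by simp [hF, t.top_mem]⟩
  obtain ⟨M, hM, hMmin⟩ := F.exists_minimal hFne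
  have hMF := Finset.mem_filter.1 hM
  have hle : ∀ A ∈ F, M ⊆ A := by
    intro A hA
    have hAF := Finset.mem_filter.1 hA
    rcases t.laminar M hMF.1 A hAF.1 with h | h | h
    · exact h
    · rcases eq_or_ne A M with rfl | hne
      · exact subset_rfl
      · exact hMmin hA h
    · exact absurd hAF.2.1 (Finset.disjoint_left.1 h hMF.2.1)
  have : t.lca x y = M := by
    apply le_antisymm
    · exact Finset.inf'_le id hM
    · exact Finset.le_inf' _ _ hle
  rw [this]
  exact ⟨hMF.1, hMF.2⟩

lemma exists_child_mem {C : Finset X} (hC : 2 ≤ C.card) {z : X} (hz : z ∈ C) :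
    ∃ A ∈ t.children C, z ∈ A := by
  set F := t.clusters.filter fun A => z ∈ A ∧ A ⊂ C with hF
  have hsz : ({z} : Finset X) ⊂ C := by
    rw [Finset.ssubset_iff_of_subset (Finset.singleton_subset_iff.2 hz)]
    obtain ⟨a, ha, b, hb, hab⟩ := Finset.one_lt_card.1 hC
    rcases eq_or_ne a z with rfl | h
    · exact ⟨b, hb, by simpa [eq_comm] using hab⟩
    · exact ⟨a, ha, by simpa using h⟩
  have hFne : F.Nonempty := ⟨{z}, Finset.mem_filter.2 ⟨t.singleton_mem z, by simp, hsz⟩⟩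
  obtain ⟨A, hA, hAmax⟩ := F.exists_maximal hFne
  have hAF := Finset.mem_filter.1 hA
  refine ⟨A, Finset.mem_filter.2 ⟨hAF.1, hAF.2.2, ?_⟩, hAF.2.1⟩
  intro B hB hAB hBC
  exact hAB.not_subset (hAmax (Finset.mem_filter.2 ⟨hB, hAB.subset hAF.2.1, hBC⟩) hAB.subset)

lemma child_spec {C A : Finset X} (hA : A ∈ t.children C) :
    A ∈ t.clusters ∧ A ⊂ C ∧ ∀ B ∈ t.clusters, A ⊂ B → ¬ B ⊂ C := by
  have := Finset.mem_filter.1 hA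
  exact ⟨this.1, this.2.1, this.2.2⟩

lemma child_nonempty {C A : Finset X} (hC : 2 ≤ C.card) (hA : A ∈ t.children C) :
    A.Nonempty := by
  obtain ⟨h1, h2, h3⟩ := t.child_spec hA
  by_contra h
  rw [Finset.not_nonempty_iff_eq_empty] at h
  obtain ⟨z, hz⟩ := Finset.card_pos.1 (by omega : 0 < C.card)
  have hsz : ({z} : Finset X) ⊂ C := by
    rw [Finset.ssubset_iff_of_subset (Finset.singleton_subset_iff.2 hz)]
    obtain ⟨a, ha, b, hb, hab⟩ := Finset.one_lt_card.1 hC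
    rcases eq_or_ne a z with rfl | hne
    · exact ⟨b, hb, by simpa [eq_comm] using hab⟩
    · exact ⟨a, ha, by simpa using hne⟩
  exact h3 {z} (t.singleton_mem z) (by simp [h]) hsz

lemma children_pairwise_disjoint {C : Finset X} :
    ∀ A ∈ t.children C, ∀ B ∈ t.children C, A ≠ B → Disjoint A B := by
  intro A hA B hB hne
  obtain ⟨hA1, hA2, hA3⟩ := t.child_spec hA
  obtain ⟨hB1, hB2, hB3⟩ := t.child_spec hB
  rcases t.laminar A hA1 B hB1 with h | h | h
  · exact absurd hB2 (hA3 B hB1 (lt_of_le_of_ne h hne))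
  · exact absurd hA2 (hB3 A hA1 (lt_of_le_of_ne h hne.symm))
  · exact h

lemma lca_card {x y : X} (hxy : x ≠ y) : 2 ≤ (t.lca x y).card := by
  obtain ⟨-, hx, hy⟩ := t.lca_spec x y
  exact Finset.one_lt_card.2 ⟨x, hx, y, hy, hxy⟩

lemma two_le_children_card {x y : X} (hxy : x ≠ y) :
    2 ≤ (t.children (t.lca x y)).card := by
  obtain ⟨hmem, hx, hy⟩ := t.lca_spec x y
  obtain ⟨A, hA, hxA⟩ := t.exists_child_mem (t.lca_card hxy) hx
  obtain ⟨B, hB, hyB⟩ := t.exists_child_mem (t.lca_card hxy) hy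
  have hAB : A ≠ B := by
    rintro rfl
    exact absurd ((t.lca_le (t.child_spec hA).1 hxA hyB)) (t.child_spec hA).2.1.not_subset
  exact Finset.one_lt_card.2 ⟨A, hA, B, hB, hAB⟩

lemma sum_children_card_le {C : Finset X} :
    ∑ A ∈ t.children C, A.card ≤ Fintype.card X := by
  rw [← Finset.card_biUnion (fun A hA B hB h => t.children_pairwise_disjoint A hA B hB h)]
  simpa using Finset.card_le_univ _

lemma diag_eq_image (s : Finset (Finset X)) : s.diag = s.image fun a => (a, a) := by
  ext ⟨a₁, a₂⟩
  simp only [Finset.mem_diag, Finset.mem_image, Prod.mk.injEq]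
  constructor
  · rintro ⟨h1, h2⟩; exact ⟨a₁, h1, rfl, h2⟩
  · rintro ⟨a, ha, rfl, rfl⟩; exact ⟨ha, rfl⟩

lemma offDiag_sum_eq (s : Finset (Finset X)) (f : Finset X → ℝ) :
    ∑ p ∈ s.offDiag, f p.1 * f p.2 = (∑ A ∈ s, f A) ^ 2 - ∑ A ∈ s, f A ^ 2 := by
  have h1 : ∑ p ∈ s ×ˢ s, f p.1 * f p.2
      = ∑ p ∈ s.diag, f p.1 * f p.2 + ∑ p ∈ s.offDiag, f p.1 * f p.2 := by
    rw [← Finset.sum_union (Finset.disjoint_diag_offDiag s), Finset.diag_union_offDiag]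
  have h2 : ∑ p ∈ s ×ˢ s, f p.1 * f p.2 = (∑ A ∈ s, f A) ^ 2 := by
    rw [Finset.sum_product, sq, Finset.sum_mul_sum]
  have h3 : ∑ p ∈ s.diag, f p.1 * f p.2 = ∑ A ∈ s, f A ^ 2 := by
    rw [diag_eq_image, Finset.sum_image (fun x _ y _ h => (Prod.mk.inj h).1)]
    simp [sq]
  rw [h2, h3] at h1
  linarith

lemma coeff_bounds (hcard : 2 ≤ Fintype.card X) {x y : X} (hxy : x ≠ y) :
    2 / (Fintype.card X : ℝ) ^ 2 ≤ t.coeff x y ∧ t.coeff x y ≤ 1 / 2 := by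
  set s := t.children (t.lca x y) with hs
  have hn2 : (2 : ℝ) ≤ (Fintype.card X : ℝ) := by exact_mod_cast hcard
  set n : ℝ := (Fintype.card X : ℝ) with hn
  have hk2 : 2 ≤ s.card := t.two_le_children_card hxy
  set k : ℝ := (s.card : ℝ) with hk
  have hk2' : (2 : ℝ) ≤ k := by rw [hk]; exact_mod_cast hk2
  set f : Finset X → ℝ := fun A => (A.card : ℝ) with hf
  have hf1 : ∀ A ∈ s, (1 : ℝ) ≤ f A := by
    intro A hA
    have h := t.child_nonempty (t.lca_card hxy) hA
    simp only [hf]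
    exact_mod_cast Finset.card_pos.2 h
  set S : ℝ := ∑ p ∈ s.offDiag, f p.1 * f p.2 with hS
  set m : ℝ := ∑ A ∈ s, f A with hm
  have hmn : m ≤ n := by
    rw [hm, hn, hf]
    have h := t.sum_children_card_le (C := t.lca x y)
    beta_reduce
    rw [hs]
    exact_mod_cast h
  have hm0 : 0 ≤ m := Finset.sum_nonneg fun A hA => le_trans one_pos.le (hf1 A hA)
  have hQ : m ^ 2 ≤ k * ∑ A ∈ s, f A ^ 2 := sq_sum_le_card_mul_sum_sq
  have hSid : S = m ^ 2 - ∑ A ∈ s, f A ^ 2 := offDiag_sum_eq s f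
  have hSlow : k * (k - 1) ≤ S := by
    have hterm : ∀ p ∈ s.offDiag, (1 : ℝ) ≤ f p.1 * f p.2 := by
      intro p hp
      obtain ⟨h1, h2, -⟩ := Finset.mem_offDiag.1 hp
      nlinarith [hf1 p.1 h1, hf1 p.2 h2]
    calc k * (k - 1) = (s.offDiag.card : ℝ) := by
          rw [Finset.offDiag_card]
          have hle : s.card ≤ s.card * s.card := Nat.le_mul_of_pos_left _ (by omega)
          rw [hk]
          push_cast [Nat.cast_sub hle]
          ring
      _ = ∑ _p ∈ s.offDiag, (1 : ℝ) := by simp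
      _ ≤ S := Finset.sum_le_sum hterm
  have hSpos : 0 < S := lt_of_lt_of_le (by nlinarith) hSlow
  have hcoeff : t.coeff x y = (k - 1) / S := rfl
  constructor
  · rw [hcoeff, div_le_div_iff₀ (by positivity) hSpos]
    nlinarith [hQ, hSid, mul_le_mul hmn hmn hm0 (by linarith : (0:ℝ) ≤ n),
      mul_le_mul_of_nonneg_right hQ (by linarith : (0:ℝ) ≤ k - 2)]
  · rw [hcoeff, div_le_div_iff₀ hSpos (by norm_num)]
    nlinarith [hSlow]

end Aux

end RPhyloTree

/-- A dissimilarity on `X`: symmetric and vanishing on the diagonal. -/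
def IsDissimilarity {X : Type*} (D : X → X → ℝ) : Prop :=
  (∀ x y, D x y = D y x) ∧ ∀ x, D x x = 0

/-- For any non-negative dissimilarity `D` on a finite set `X` with `n ≥ 2` elements and
any rooted phylogenetic tree `T` on `X`, the NEME score satisfies
`σ_D(T) ≤ (n²/4) · min{σ_D(T') : T' a rooted phylogenetic tree on X}`, i.e.
`σ_D(T) ≤ (n²/4) · σ_D(T')` for every rooted phylogenetic tree `T'` on `X`. -/
theorem stmt3 {X : Type*} [Fintype X] [DecidableEq X]
    (hn : 2 ≤ Fintype.card X) (D : X → X → ℝ)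
    (hD : IsDissimilarity D) (hpos : ∀ x y, 0 ≤ D x y)
    (t t' : RPhyloTree X) :
    t.score D ≤ ((Fintype.card X : ℝ) ^ 2 / 4) * t'.score D := by
  set n : ℝ := (Fintype.card X : ℝ) with hnn
  have hn0 : (0 : ℝ) < n := by rw [hnn]; exact_mod_cast (by omega : 0 < Fintype.card X)
  set T : ℝ := ∑ p ∈ (Finset.univ : Finset X).offDiag, D p.1 p.2 with hT
  have hT0 : 0 ≤ T := Finset.sum_nonneg fun p _ => hpos p.1 p.2
  have h1 : t.score D ≤ (1 / 2) * ((1 / 2) * T) := by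
    have hsum : ∑ p ∈ (Finset.univ : Finset X).offDiag, t.coeff p.1 p.2 * D p.1 p.2
        ≤ ∑ p ∈ (Finset.univ : Finset X).offDiag, (1 / 2) * D p.1 p.2 := by
      apply Finset.sum_le_sum
      intro p hp
      have hne : p.1 ≠ p.2 := (Finset.mem_offDiag.1 hp).2.2
      exact mul_le_mul_of_nonneg_right (t.coeff_bounds hn hne).2 (hpos p.1 p.2)
    calc t.score D = (1 / 2) * ∑ p ∈ (Finset.univ : Finset X).offDiag,
          t.coeff p.1 p.2 * D p.1 p.2 := rfl
      _ ≤ (1 / 2) * ∑ p ∈ (Finset.univ : Finset X).offDiag, (1 / 2) * D p.1 p.2 :=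
          mul_le_mul_of_nonneg_left hsum (by norm_num)
      _ = (1 / 2) * ((1 / 2) * T) := by rw [hT, ← Finset.mul_sum]
  have h2 : (1 / 2) * ((2 / n ^ 2) * T) ≤ t'.score D := by
    have hsum : ∑ p ∈ (Finset.univ : Finset X).offDiag, (2 / n ^ 2) * D p.1 p.2
        ≤ ∑ p ∈ (Finset.univ : Finset X).offDiag, t'.coeff p.1 p.2 * D p.1 p.2 := by
      apply Finset.sum_le_sum
      intro p hp
      have hne : p.1 ≠ p.2 := (Finset.mem_offDiag.1 hp).2.2
      exact mul_le_mul_of_nonneg_right (t'.coeff_bounds hn hne).1 (hpos p.1 p.2)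
    calc (1 / 2) * ((2 / n ^ 2) * T)
        = (1 / 2) * ∑ p ∈ (Finset.univ : Finset X).offDiag, (2 / n ^ 2) * D p.1 p.2 := by
          rw [hT, ← Finset.mul_sum]
      _ ≤ (1 / 2) * ∑ p ∈ (Finset.univ : Finset X).offDiag,
          t'.coeff p.1 p.2 * D p.1 p.2 := mul_le_mul_of_nonneg_left hsum (by norm_num)
      _ = t'.score D := rfl
  calc t.score D ≤ (1 / 2) * ((1 / 2) * T) := h1
    _ = (n ^ 2 / 4) * ((1 / 2) * ((2 / n ^ 2) * T)) := by field_simp; ring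
    _ ≤ (n ^ 2 / 4) * t'.score D :=
        mul_le_mul_of_nonneg_left h2 (by positivity)
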